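/- Let u : ℝ → ℝ be of class C⁴ and fix x ∈ ℝ. For the QUICK interpolation (κ = 1/2), the average of the left and right interpolated values at the right face is fourth-order accurate: (uL(u,h) + uR(u,h))/2 − u(x + h/2) = O(h⁴) as h → 0⁺ (cubic exactness of the averaged QUICK interpolation on a uniform grid). -/

import Mathlib

/-!
For κ = 1/2 the averaged face value is the four-point stencil
(-u(x-h) + 9u(x) + 9u(x+h) - u(x+2h))/16, whose weights w and nodes a satisfy the moment
conditions ∑ wᵢ aᵢᵏ = (1/2)ᵏ for k ≤ 3: it reproduces the value at x + h/2 of every cubic.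
Applied to the cubic Taylor polynomial of u at x it is therefore exact, and what remains is a
combination of Taylor remainders u(x + aᵢh) - P₃(x + aᵢh) = O(h⁴).
-/

open Asymptotics Filter Set MeasureTheory

noncomputable def uL (κ x : ℝ) (v : ℝ → ℝ) (h : ℝ) : ℝ :=
  (v x + v (x + h)) / 2 - ((1 - κ) / 4) * (v (x + h) - 2 * v x + v (x - h))

noncomputable def uR (κ x : ℝ) (v : ℝ → ℝ) (h : ℝ) : ℝ :=
  (v (x + h) + v x) / 2 - ((1 - κ) / 4) * (v (x + 2 * h) - 2 * v (x + h) + v x)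

/-- Left-face interpolated value from the left: same formula with `x` replaced by `x - h`. -/
noncomputable def uLm (κ x : ℝ) (v : ℝ → ℝ) (h : ℝ) : ℝ := uL κ (x - h) v h

/-- Left-face interpolated value from the right: same formula with `x` replaced by `x - h`. -/
noncomputable def uRm (κ x : ℝ) (v : ℝ → ℝ) (h : ℝ) : ℝ := uR κ (x - h) v h

open scoped Topology Nat

section Stencil

variable {E : Type*} [NormedAddCommGroup E] [NormedSpace ℝ E]

theorem taylor_isBigO_univ {f : ℝ → E} {x₀ : ℝ} {n : ℕ} (hf : ContDiff ℝ (n + 1) f) :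
    (fun x ↦ f x - taylorWithinEval f n univ x₀ x) =O[𝓝 x₀] fun x ↦ (x - x₀) ^ (n + 1) := by
  have hnext : (fun x ↦ f x - taylorWithinEval f (n + 1) univ x₀ x) =O[𝓝 x₀]
      fun x ↦ (x - x₀) ^ (n + 1) :=
    (taylor_isLittleO_univ (by exact_mod_cast hf)).isBigO
  have hterm : (fun x ↦ (((n + 1)! : ℝ)⁻¹ * (x - x₀) ^ (n + 1)) •
      iteratedDerivWithin (n + 1) f univ x₀) =O[𝓝 x₀] fun x ↦ (x - x₀) ^ (n + 1) := by
    refine isBigO_iff.2 ⟨((n + 1)! : ℝ)⁻¹ * ‖iteratedDerivWithin (n + 1) f univ x₀‖, ?_⟩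
    filter_upwards with x
    rw [norm_smul, norm_mul, norm_inv, RCLike.norm_natCast, mul_right_comm]
  refine (hnext.add hterm).congr_left fun x ↦ ?_
  rw [taylorWithinEval_succ, Nat.factorial_succ]
  push_cast
  abel

theorem taylor_comp_const_mul_isBigO {f : ℝ → E} {x₀ : ℝ} {n : ℕ} (hf : ContDiff ℝ (n + 1) f)
    (a : ℝ) :
    (fun h ↦ f (x₀ + a * h) - taylorWithinEval f n univ x₀ (x₀ + a * h)) =O[𝓝 0]
      fun h ↦ h ^ (n + 1) := by
  have hlim : Tendsto (fun h : ℝ ↦ x₀ + a * h) (𝓝 0) (𝓝 x₀) :=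
    (by fun_prop : Continuous fun h : ℝ ↦ x₀ + a * h).tendsto' 0 x₀ (by simp)
  refine ((taylor_isBigO_univ hf).comp_tendsto hlim).trans ?_
  simpa [Function.comp_def, mul_pow] using
    isBigO_const_mul_self (a ^ (n + 1)) (fun h : ℝ ↦ h ^ (n + 1)) (𝓝 0)

variable {ι : Type*} {s : Finset ι} {w a : ι → ℝ} {b : ℝ} {n : ℕ}

theorem sum_smul_taylorWithinEval_of_moments (hmom : ∀ k ≤ n, ∑ i ∈ s, w i * a i ^ k = b ^ k)
    (f : ℝ → E) (t : Set ℝ) (x₀ h : ℝ) :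
    ∑ i ∈ s, w i • taylorWithinEval f n t x₀ (x₀ + a i * h) =
      taylorWithinEval f n t x₀ (x₀ + b * h) := by
  simp only [taylor_within_apply, add_sub_cancel_left, Finset.smul_sum, smul_smul]
  rw [Finset.sum_comm]
  refine Finset.sum_congr rfl fun k hk ↦ ?_
  rw [← Finset.sum_smul]
  congr 1
  rw [mul_pow, ← hmom k (Nat.lt_succ_iff.1 (Finset.mem_range.1 hk)), Finset.sum_mul,
    Finset.mul_sum]
  refine Finset.sum_congr rfl fun i _ ↦ ?_
  ring

theorem stencil_sub_isBigO_of_moments (hmom : ∀ k ≤ n, ∑ i ∈ s, w i * a i ^ k = b ^ k) {f : ℝ → E}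
    (hf : ContDiff ℝ (n + 1) f) (x₀ : ℝ) :
    (fun h ↦ ∑ i ∈ s, w i • f (x₀ + a i * h) - f (x₀ + b * h)) =O[𝓝 0] fun h ↦ h ^ (n + 1) := by
  have hsum := IsBigO.sum fun i (_ : i ∈ s) ↦
    (taylor_comp_const_mul_isBigO (x₀ := x₀) hf (a i)).const_smul_left (w i)
  refine (hsum.sub (taylor_comp_const_mul_isBigO (x₀ := x₀) hf b)).congr_left fun h ↦ ?_
  simp only [Finset.sum_apply, Pi.smul_apply, smul_sub, Finset.sum_sub_distrib,
    sum_smul_taylorWithinEval_of_moments hmom]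
  abel

end Stencil

theorem quick_average_interpolation_fourth_order (u : ℝ → ℝ) (hu : ContDiff ℝ 4 u) (x : ℝ) :
    (fun h : ℝ => (uL (1 / 2) x u h + uR (1 / 2) x u h) / 2 - u (x + h / 2))
      =O[nhdsWithin 0 (Set.Ioi 0)] fun h : ℝ => h ^ 4 := by
  have hmom : ∀ k ≤ 3,
      ∑ i, ![-1 / 16, 9 / 16, 9 / 16, -1 / 16] i * ![-1, 0, 1, 2] i ^ k = (1 / 2 : ℝ) ^ k := by
    intro k hk
    interval_cases k <;>
      simp only [Fin.sum_univ_four, Fin.isValue, Matrix.cons_val_zero, Matrix.cons_val_one,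
        Matrix.cons_val] <;> norm_num
  refine ((stencil_sub_isBigO_of_moments hmom (by exact_mod_cast hu) x).mono nhdsWithin_le_nhds).congr_left
    fun h ↦ ?_
  simp only [Fin.sum_univ_four, Matrix.cons_val_zero, Matrix.cons_val_one, Matrix.cons_val,
    Fin.isValue, smul_eq_mul, uL, uR]
  ring_nf
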